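/- arXiv:1204.5123 — 2 statements merged into one kernel-verified Lean document; each statement's English description precedes it below -/
import Mathlib

section
/- For all ρ > 0 and all P ∈ ℝ^3, one has ρ - sqrt(P·P + 1) + sqrt((|P| - ρ)^2 + 1) > ρ / (2(P·P + 1)). -/
/-!
Write `s = √(x² + 1)` with `x = ‖P‖`. Cauchy–Schwarz for the vectors `(x, 1)` and `(x - ρ, 1)`
(the tangent line of the convex function `u ↦ √(u² + 1)` at `x`) gives
`s · √((x - ρ)² + 1) ≥ s² - ρ x`, so the gap is at least `ρ (s - x) / s`. This beats
`ρ / (2 s²)` because `2 s (s - x) - 1 = (s - x)² > 0`.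
-/

open Real

theorem mul_add_one_le_sqrt_sq_add_one_mul (u v : ℝ) :
    u * v + 1 ≤ √(u ^ 2 + 1) * √(v ^ 2 + 1) := by
  rw [← sqrt_mul (by positivity)]
  exact le_sqrt_of_sq_le (by nlinarith [sq_nonneg (u - v)])

theorem div_two_mul_sq_add_one_lt_sub_sqrt_add_sqrt (x : ℝ) {ρ : ℝ} (hρ : 0 < ρ) :
    ρ / (2 * (x ^ 2 + 1)) < ρ - √(x ^ 2 + 1) + √((x - ρ) ^ 2 + 1) := by
  set s := √(x ^ 2 + 1)
  have hs : s ^ 2 = x ^ 2 + 1 := sq_sqrt (by positivity)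
  have hs_pos : 0 < s := sqrt_pos.2 (by positivity)
  have hxs : x < s := lt_sqrt_of_sq_lt (by linarith)
  have tangent : s ^ 2 - ρ * x ≤ s * √((x - ρ) ^ 2 + 1) := by
    nlinarith [mul_add_one_le_sqrt_sq_add_one_mul x (x - ρ)]
  calc ρ / (2 * (x ^ 2 + 1)) = ρ / (2 * s ^ 2) := by rw [hs]
    _ < ρ * (s - x) / s := by
      rw [div_lt_div_iff₀ (by positivity) hs_pos, ← sub_pos]
      have hexcess : ρ * (s - x) * (2 * s ^ 2) - ρ * s = ρ * s * (s - x) ^ 2 := by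
        linear_combination ρ * s * hs
      rw [hexcess]
      exact mul_pos (mul_pos hρ hs_pos) (pow_pos (sub_pos.2 hxs) 2)
    _ ≤ ρ - s + √((x - ρ) ^ 2 + 1) := by
      rw [div_le_iff₀ hs_pos]
      linarith

theorem gap_lower_bound (ρ : ℝ) (hρ : 0 < ρ) (P : EuclideanSpace ℝ (Fin 3)) :
    ρ - Real.sqrt ((inner ℝ P P : ℝ) + 1) + Real.sqrt ((‖P‖ - ρ) ^ 2 + 1)
      > ρ / (2 * ((inner ℝ P P : ℝ) + 1)) := by
  rw [real_inner_self_eq_norm_sq]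
  exact div_two_mul_sq_add_one_lt_sub_sqrt_add_sqrt ‖P‖ hρ
end

section
/- The function f(r) = sqrt((|P| - r)^2 + 1) - sqrt(|P|^2 + 1) + max{ρ, r}, defined for r ≥ 0 with fixed ρ > 0 and P ∈ ℝ^3, satisfies inf_{r ≥ 0} f(r) ≥ min{ρ, 1} / (2(|P|^2 + 1)). -/
/-!
Two-term Cauchy–Schwarz, `(p - r) p + 1 ≤ √((p - r)² + 1) √(p² + 1)`, gives
`√((p - r)² + 1) - √(p² + 1) ≥ -r p / √(p² + 1)`. Since `r ≤ max ρ r`, the function is at least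
`max ρ r · (1 - p / √(p² + 1))`, and `1 - p / √(p² + 1) = 1 / (√(p² + 1) (√(p² + 1) + p))`
is at least `1 / (2 (p² + 1))`.
-/

open Real

lemma mul_add_one_le_sqrt_mul_sqrt (a b : ℝ) : a * b + 1 ≤ √(a ^ 2 + 1) * √(b ^ 2 + 1) := by
  rw [← sqrt_mul (by positivity)]
  refine (le_abs_self _).trans (abs_le_sqrt ?_)
  nlinarith [sq_nonneg (a - b)]

lemma sqrt_sq_add_one_sub_le (p r : ℝ) :
    √(p ^ 2 + 1) - r * p / √(p ^ 2 + 1) ≤ √((p - r) ^ 2 + 1) := by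
  have hs : 0 < √(p ^ 2 + 1) := sqrt_pos.2 (by positivity)
  have hsq : √(p ^ 2 + 1) ^ 2 = p ^ 2 + 1 := sq_sqrt (by positivity)
  rw [sub_le_iff_le_add, ← sub_le_iff_le_add', le_div_iff₀ hs]
  nlinarith [mul_add_one_le_sqrt_mul_sqrt (p - r) p]

lemma one_div_two_mul_sq_add_one_le (p : ℝ) :
    1 / (2 * (p ^ 2 + 1)) ≤ 1 - p / √(p ^ 2 + 1) := by
  have hs : 0 < √(p ^ 2 + 1) := sqrt_pos.2 (by positivity)
  have hsq : √(p ^ 2 + 1) ^ 2 = p ^ 2 + 1 := sq_sqrt (by positivity)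
  have hp : p < √(p ^ 2 + 1) := lt_sqrt_of_sq_lt (by linarith)
  rw [one_sub_div hs.ne', div_le_div_iff₀ (by positivity) hs]
  nlinarith [sq_nonneg (√(p ^ 2 + 1) - p)]

lemma max_div_le_sqrt_sub_sqrt_add_max (ρ p r : ℝ) (hp : 0 ≤ p) (hr : 0 ≤ r) :
    max ρ r / (2 * (p ^ 2 + 1)) ≤ √((p - r) ^ 2 + 1) - √(p ^ 2 + 1) + max ρ r := by
  set M := max ρ r
  have hrM : r ≤ M := le_max_right ρ r
  have hM : 0 ≤ M := hr.trans hrM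
  have hps : 0 ≤ p / √(p ^ 2 + 1) := by positivity
  calc M / (2 * (p ^ 2 + 1)) = M * (1 / (2 * (p ^ 2 + 1))) := by ring
    _ ≤ M * (1 - p / √(p ^ 2 + 1)) := by gcongr; exact one_div_two_mul_sq_add_one_le p
    _ ≤ M - r * (p / √(p ^ 2 + 1)) := by nlinarith [mul_le_mul_of_nonneg_right hrM hps]
    _ ≤ √((p - r) ^ 2 + 1) - √(p ^ 2 + 1) + M := by
      have := sqrt_sq_add_one_sub_le p r
      rw [mul_div_assoc] at this
      linarith

theorem inf_gap_bound_general (ρ : ℝ) (P : EuclideanSpace ℝ (Fin 3)) :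
    min ρ 1 / (2 * (‖P‖ ^ 2 + 1)) ≤
      sInf ((fun r : ℝ =>
        Real.sqrt ((‖P‖ - r) ^ 2 + 1) - Real.sqrt (‖P‖ ^ 2 + 1) + max ρ r) '' Set.Ici 0) := by
  refine le_csInf ⟨_, 0, Set.self_mem_Ici, rfl⟩ ?_
  rintro _ ⟨r, hr, rfl⟩
  calc min ρ 1 / (2 * (‖P‖ ^ 2 + 1)) ≤ max ρ r / (2 * (‖P‖ ^ 2 + 1)) := by
        gcongr
        exact (min_le_left ρ 1).trans (le_max_left ρ r)
    _ ≤ _ := max_div_le_sqrt_sub_sqrt_add_max ρ ‖P‖ r (norm_nonneg P) hr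

theorem inf_gap_bound (ρ : ℝ) (hρ : 0 < ρ) (P : EuclideanSpace ℝ (Fin 3)) :
    min ρ 1 / (2 * (‖P‖ ^ 2 + 1)) ≤
      sInf ((fun r : ℝ =>
        Real.sqrt ((‖P‖ - r) ^ 2 + 1) - Real.sqrt (‖P‖ ^ 2 + 1) + max ρ r) '' Set.Ici 0) :=
  inf_gap_bound_general ρ P
end
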